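/- For d ≥ 3, the complete bipartite graph K_{2,d} admits a star edge coloring with 2d − ⌊d/2⌋ colors. -/
import Mathlib


open SimpleGraph

/-- A star edge coloring: a proper edge coloring with no 2-colored path or cycle
on four edges. For proper colorings, this is equivalent to requiring that every
walk of length 4 with pairwise distinct edges sees at least 3 colors. -/
def IsStarEdgeColoring {V β : Type*} [DecidableEq β] (G : SimpleGraph V)
    (c : Sym2 V → β) : Prop :=
  (∀ ⦃e₁⦄, e₁ ∈ G.edgeSet → ∀ ⦃e₂⦄, e₂ ∈ G.edgeSet → e₁ ≠ e₂ →
      (∃ v, v ∈ e₁ ∧ v ∈ e₂) → c e₁ ≠ c e₂) ∧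
  ∀ (u v : V) (p : G.Walk u v), p.length = 4 → p.edges.Nodup →
    3 ≤ (p.edges.map c).toFinset.card

/-- The star chromatic index: the least `n` such that `G` has a star edge
coloring with colors in `Fin n`. -/
noncomputable def starChromaticIndex {V : Type*} (G : SimpleGraph V) : ℕ :=
  sInf {n | ∃ c : Sym2 V → Fin n, IsStarEdgeColoring G c}



def gfun (d j : ℕ) : ℕ := if j < d - d/2 then d + j else j - (d - d/2)

lemma gfun_lt (d j : ℕ) (hj : j < d) : gfun d j < 2*d - d/2 := by
  unfold gfun; split <;> omega

lemma gfun_ne (d j : ℕ) (hd : 1 ≤ d) (hj : j < d) : gfun d j ≠ j := by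
  unfold gfun; split <;> omega

lemma gfun_inj (d j j' : ℕ) (hj : j < d) (hj' : j' < d)
    (h : gfun d j = gfun d j') : j = j' := by
  unfold gfun at h; split at h <;> split at h <;> omega

lemma gfun_small (d j : ℕ) (hj : j < d) (h : gfun d j < d) :
    d - d/2 ≤ j ∧ gfun d j < d - d/2 := by
  unfold gfun at h ⊢
  by_cases hc : j < d - d/2
  · rw [if_pos hc] at h; omega
  · rw [if_neg hc] at h ⊢; omega

def colF (d : ℕ) : (Fin 2 ⊕ Fin d) → (Fin 2 ⊕ Fin d) → ℕ
  | Sum.inl i, Sum.inr j => if i.val = 0 then j.val else gfun d j.val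
  | Sum.inr j, Sum.inl i => if i.val = 0 then j.val else gfun d j.val
  | _, _ => 0

lemma colF_symm (d : ℕ) (u v : Fin 2 ⊕ Fin d) : colF d u v = colF d v u := by
  rcases u with a|a <;> rcases v with b|b <;> rfl

lemma colF_lt (d : ℕ) (hd : 3 ≤ d) (u v : Fin 2 ⊕ Fin d) : colF d u v < 2*d - d/2 := by
  rcases u with a|a <;> rcases v with b|b <;> simp only [colF] <;>
    first
    | omega
    | (split
       · exact lt_of_lt_of_le b.2 (by omega)
       · exact gfun_lt d _ b.2)
    | (split
       · exact lt_of_lt_of_le a.2 (by omega)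
       · exact gfun_lt d _ a.2)

noncomputable def colC (d : ℕ) (hd : 3 ≤ d) : Sym2 (Fin 2 ⊕ Fin d) → Fin (2*d - d/2) :=
  Sym2.lift ⟨fun u v => ⟨colF d u v, colF_lt d hd u v⟩,
    fun u v => by simp [colF_symm]⟩

lemma colC_mk (d : ℕ) (hd : 3 ≤ d) (u v : Fin 2 ⊕ Fin d) :
    (colC d hd s(u, v)).val = colF d u v := rfl

lemma colC_ne (d : ℕ) (hd : 3 ≤ d) {u v u' v' : Fin 2 ⊕ Fin d}
    (h : colF d u v ≠ colF d u' v') : colC d hd s(u, v) ≠ colC d hd s(u', v') := by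
  intro he
  exact h (by rw [← colC_mk d hd u v, ← colC_mk d hd u' v', he])

lemma three_le_card {α : Type*} [DecidableEq α] (a b c e : α)
    (hab : a ≠ b) (hbc : b ≠ c) (hce : c ≠ e) (h : a ≠ c ∨ b ≠ e) :
    3 ≤ ([a, b, c, e] : List α).toFinset.card := by
  rcases h with h | h
  · have hsub : ({a, b, c} : Finset α) ⊆ [a, b, c, e].toFinset := by
      intro x hx; simp at hx ⊢; tauto
    calc 3 = ({a, b, c} : Finset α).card := by
              rw [Finset.card_insert_of_notMem (by simp [hab, h]),
                Finset.card_insert_of_notMem (by simp [hbc]), Finset.card_singleton]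
      _ ≤ _ := Finset.card_le_card hsub
  · have hsub : ({b, c, e} : Finset α) ⊆ [a, b, c, e].toFinset := by
      intro x hx; simp at hx ⊢; tauto
    calc 3 = ({b, c, e} : Finset α).card := by
              rw [Finset.card_insert_of_notMem (by simp [hbc, h]),
                Finset.card_insert_of_notMem (by simp [hce]), Finset.card_singleton]
      _ ≤ _ := Finset.card_le_card hsub

-- the four "bicolored path" impossibilities
lemma keyA (d y y' : ℕ) (hd : 3 ≤ d) (hy : y < d) (hy' : y' < d) :
    ¬(y = gfun d y' ∧ gfun d y = y') := by
  rintro ⟨h1, h2⟩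
  have A := gfun_small d y hy (h2 ▸ hy')
  have B := gfun_small d y' hy' (h1 ▸ hy)
  omega

lemma keyC (d y0 y2 y4 : ℕ) (hd : 3 ≤ d) (h0 : y0 < d) (h2 : y2 < d) (h4 : y4 < d) :
    ¬(y0 = gfun d y2 ∧ y2 = gfun d y4) := by
  rintro ⟨ha, hb⟩
  have A := gfun_small d y2 h2 (ha ▸ h0)
  have B := gfun_small d y4 h4 (hb ▸ h2)
  omega

lemma keyD (d y0 y2 y4 : ℕ) (hd : 3 ≤ d) (h0 : y0 < d) (h2 : y2 < d) (h4 : y4 < d) :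
    ¬(gfun d y0 = y2 ∧ gfun d y2 = y4) := by
  rintro ⟨ha, hb⟩
  have A := gfun_small d y0 h0 (ha ▸ h2)
  have B := gfun_small d y2 h2 (hb ▸ h4)
  omega

lemma edge_repr {d : ℕ} {e : Sym2 (Fin 2 ⊕ Fin d)}
    (he : e ∈ (completeBipartiteGraph (Fin 2) (Fin d)).edgeSet) :
    ∃ i j, e = s(Sum.inl i, Sum.inr j) := by
  induction e with
  | _ u v =>
    simp only [mem_edgeSet, completeBipartiteGraph_adj] at he
    rcases u with a|a <;> rcases v with b|b
    · simp at he
    · exact ⟨a, b, rfl⟩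
    · exact ⟨b, a, Sym2.eq_swap⟩
    · simp at he

lemma colF_l0 (d : ℕ) (x : Fin 2) (y : Fin d) (h : x.val = 0) :
    colF d (Sum.inl x) (Sum.inr y) = y.val := by simp [colF, h]

lemma colF_l1 (d : ℕ) (x : Fin 2) (y : Fin d) (h : x.val = 1) :
    colF d (Sum.inl x) (Sum.inr y) = gfun d y.val := by simp [colF, h]

lemma colF_r0 (d : ℕ) (x : Fin 2) (y : Fin d) (h : x.val = 0) :
    colF d (Sum.inr y) (Sum.inl x) = y.val := by simp [colF, h]

lemma colF_r1 (d : ℕ) (x : Fin 2) (y : Fin d) (h : x.val = 1) :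
    colF d (Sum.inr y) (Sum.inl x) = gfun d y.val := by simp [colF, h]

lemma fin2_vals {x x' : Fin 2} (h : x ≠ x') :
    (x.val = 0 ∧ x'.val = 1) ∨ (x.val = 1 ∧ x'.val = 0) := by
  have := x.2; have := x'.2
  have : x.val ≠ x'.val := fun hh => h (Fin.ext hh)
  omega

lemma caseL (d : ℕ) (hd : 3 ≤ d) (x0 x2 x4 : Fin 2) (y1 y3 : Fin d)
    (h02 : x0 ≠ x2) (h13 : y1 ≠ y3) (h24 : x2 ≠ x4) :
    3 ≤ ([colC d hd s(Sum.inl x0, Sum.inr y1), colC d hd s(Sum.inr y1, Sum.inl x2),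
        colC d hd s(Sum.inl x2, Sum.inr y3),
        colC d hd s(Sum.inr y3, Sum.inl x4)]).toFinset.card := by
  have hx4 : x4 = x0 := by
    have := x0.2; have := x2.2; have := x4.2
    have h1 : x0.val ≠ x2.val := fun hh => h02 (Fin.ext hh)
    have h2 : x2.val ≠ x4.val := fun hh => h24 (Fin.ext hh)
    exact Fin.ext (by omega)
  subst hx4
  have hy13 : y1.val ≠ y3.val := fun hh => h13 (Fin.ext hh)
  rcases fin2_vals h02 with ⟨e0, e2⟩ | ⟨e0, e2⟩
  · refine three_le_card _ _ _ _ ?_ ?_ ?_ ?_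
    · apply Fin.ne_of_val_ne
      rw [colC_mk, colC_mk, colF_l0 d _ _ e0, colF_r1 d _ _ e2]
      exact (gfun_ne d _ (by omega) y1.2).symm
    · apply Fin.ne_of_val_ne
      rw [colC_mk, colC_mk, colF_r1 d _ _ e2, colF_l1 d _ _ e2]
      exact fun hh => hy13 (gfun_inj d _ _ y1.2 y3.2 hh)
    · apply Fin.ne_of_val_ne
      rw [colC_mk, colC_mk, colF_l1 d _ _ e2, colF_r0 d _ _ e0]
      exact gfun_ne d _ (by omega) y3.2
    · by_contra hcon
      push_neg at hcon
      obtain ⟨hA, hB⟩ := hcon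
      have hA' := congrArg Fin.val hA
      have hB' := congrArg Fin.val hB
      rw [colC_mk, colC_mk, colF_l0 d _ _ e0, colF_l1 d _ _ e2] at hA'
      rw [colC_mk, colC_mk, colF_r1 d _ _ e2, colF_r0 d _ _ e0] at hB'
      exact keyA d y1.val y3.val hd y1.2 y3.2 ⟨hA', hB'⟩
  · refine three_le_card _ _ _ _ ?_ ?_ ?_ ?_
    · apply Fin.ne_of_val_ne
      rw [colC_mk, colC_mk, colF_l1 d _ _ e0, colF_r0 d _ _ e2]
      exact gfun_ne d _ (by omega) y1.2
    · apply Fin.ne_of_val_ne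
      rw [colC_mk, colC_mk, colF_r0 d _ _ e2, colF_l0 d _ _ e2]
      exact hy13
    · apply Fin.ne_of_val_ne
      rw [colC_mk, colC_mk, colF_l0 d _ _ e2, colF_r1 d _ _ e0]
      exact (gfun_ne d _ (by omega) y3.2).symm
    · by_contra hcon
      push_neg at hcon
      obtain ⟨hA, hB⟩ := hcon
      have hA' := congrArg Fin.val hA
      have hB' := congrArg Fin.val hB
      rw [colC_mk, colC_mk, colF_l1 d _ _ e0, colF_l0 d _ _ e2] at hA'
      rw [colC_mk, colC_mk, colF_r0 d _ _ e2, colF_r1 d _ _ e0] at hB'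
      exact keyA d y1.val y3.val hd y1.2 y3.2 ⟨hB', hA'⟩

lemma caseR (d : ℕ) (hd : 3 ≤ d) (x1 x3 : Fin 2) (y0 y2 y4 : Fin d)
    (h02 : y0 ≠ y2) (h13 : x1 ≠ x3) (h24 : y2 ≠ y4) :
    3 ≤ ([colC d hd s(Sum.inr y0, Sum.inl x1), colC d hd s(Sum.inl x1, Sum.inr y2),
        colC d hd s(Sum.inr y2, Sum.inl x3),
        colC d hd s(Sum.inl x3, Sum.inr y4)]).toFinset.card := by
  have hy02 : y0.val ≠ y2.val := fun hh => h02 (Fin.ext hh)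
  have hy24 : y2.val ≠ y4.val := fun hh => h24 (Fin.ext hh)
  rcases fin2_vals h13 with ⟨e1, e3⟩ | ⟨e1, e3⟩
  · refine three_le_card _ _ _ _ ?_ ?_ ?_ ?_
    · apply Fin.ne_of_val_ne
      rw [colC_mk, colC_mk, colF_r0 d _ _ e1, colF_l0 d _ _ e1]
      exact hy02
    · apply Fin.ne_of_val_ne
      rw [colC_mk, colC_mk, colF_l0 d _ _ e1, colF_r1 d _ _ e3]
      exact (gfun_ne d _ (by omega) y2.2).symm
    · apply Fin.ne_of_val_ne
      rw [colC_mk, colC_mk, colF_r1 d _ _ e3, colF_l1 d _ _ e3]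
      exact fun hh => hy24 (gfun_inj d _ _ y2.2 y4.2 hh)
    · by_contra hcon
      push_neg at hcon
      obtain ⟨hA, hB⟩ := hcon
      have hA' := congrArg Fin.val hA
      have hB' := congrArg Fin.val hB
      rw [colC_mk, colC_mk, colF_r0 d _ _ e1, colF_r1 d _ _ e3] at hA'
      rw [colC_mk, colC_mk, colF_l0 d _ _ e1, colF_l1 d _ _ e3] at hB'
      exact keyC d y0.val y2.val y4.val hd y0.2 y2.2 y4.2 ⟨hA', hB'⟩
  · refine three_le_card _ _ _ _ ?_ ?_ ?_ ?_
    · apply Fin.ne_of_val_ne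
      rw [colC_mk, colC_mk, colF_r1 d _ _ e1, colF_l1 d _ _ e1]
      exact fun hh => hy02 (gfun_inj d _ _ y0.2 y2.2 hh)
    · apply Fin.ne_of_val_ne
      rw [colC_mk, colC_mk, colF_l1 d _ _ e1, colF_r0 d _ _ e3]
      exact gfun_ne d _ (by omega) y2.2
    · apply Fin.ne_of_val_ne
      rw [colC_mk, colC_mk, colF_r0 d _ _ e3, colF_l0 d _ _ e3]
      exact hy24
    · by_contra hcon
      push_neg at hcon
      obtain ⟨hA, hB⟩ := hcon
      have hA' := congrArg Fin.val hA
      have hB' := congrArg Fin.val hB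
      rw [colC_mk, colC_mk, colF_r1 d _ _ e1, colF_r0 d _ _ e3] at hA'
      rw [colC_mk, colC_mk, colF_l1 d _ _ e1, colF_l0 d _ _ e3] at hB'
      exact keyD d y0.val y2.val y4.val hd y0.2 y2.2 y4.2 ⟨hA', hB'⟩

lemma ne_of_edge_ne_lr {d : ℕ} {x x' : Fin 2} {y : Fin d}
    (h : s(Sum.inl x, Sum.inr y) ≠ s(Sum.inr y, Sum.inl x')) : x ≠ x' := by
  rintro rfl; exact h Sym2.eq_swap

lemma ne_of_edge_ne_rl {d : ℕ} {y y' : Fin d} {x : Fin 2}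
    (h : s(Sum.inr y, Sum.inl x) ≠ s(Sum.inl x, Sum.inr y')) : y ≠ y' := by
  rintro rfl; exact h Sym2.eq_swap

theorem K2d_star_colorable (d : ℕ) (hd : 3 ≤ d) :
    ∃ c : Sym2 (Fin 2 ⊕ Fin d) → Fin (2 * d - d / 2),
      IsStarEdgeColoring (completeBipartiteGraph (Fin 2) (Fin d)) c := by
  refine ⟨colC d hd, ?_, ?_⟩
  · rintro e1 he1 e2 he2 hne ⟨v, hv1, hv2⟩
    obtain ⟨i1, j1, rfl⟩ := edge_repr he1
    obtain ⟨i2, j2, rfl⟩ := edge_repr he2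
    apply colC_ne
    rcases v with x | y
    · have h1 : x = i1 := by simpa using hv1
      have h2 : x = i2 := by simpa using hv2
      subst h1; subst h2
      have hj : j1 ≠ j2 := by rintro rfl; exact hne rfl
      have hj' : j1.val ≠ j2.val := fun hh => hj (Fin.ext hh)
      by_cases h0 : x.val = 0
      · rw [colF_l0 d _ _ h0, colF_l0 d _ _ h0]; exact hj'
      · have h1 : x.val = 1 := by have := x.2; omega
        rw [colF_l1 d _ _ h1, colF_l1 d _ _ h1]
        exact fun hh => hj' (gfun_inj d _ _ j1.2 j2.2 hh)
    · have h1 : y = j1 := by simpa using hv1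
      have h2 : y = j2 := by simpa using hv2
      subst h1; subst h2
      have hi : i1 ≠ i2 := by rintro rfl; exact hne rfl
      rcases fin2_vals hi with ⟨e0, e2⟩ | ⟨e0, e2⟩
      · rw [colF_l0 d _ _ e0, colF_l1 d _ _ e2]
        exact (gfun_ne d _ (by omega) y.2).symm
      · rw [colF_l1 d _ _ e0, colF_l0 d _ _ e2]
        exact gfun_ne d _ (by omega) y.2
  · intro u v p hlen hnd
    cases p with
    | nil => simp at hlen
    | @cons _ w1 _ h1 p =>
    cases p with
    | nil => simp at hlen
    | @cons _ w2 _ h2 p =>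
    cases p with
    | nil => simp at hlen
    | @cons _ w3 _ h3 p =>
    cases p with
    | nil => simp at hlen
    | @cons _ w4 _ h4 p =>
    cases p with
    | @cons _ w5 _ h5 p => simp [SimpleGraph.Walk.length_cons] at hlen
    | nil =>
    simp only [SimpleGraph.Walk.edges_cons, SimpleGraph.Walk.edges_nil,
      List.map_cons, List.map_nil] at hnd ⊢
    simp only [List.nodup_cons, List.mem_cons, List.not_mem_nil, or_false,
      List.mem_singleton, not_or, List.nodup_nil, and_true] at hnd
    obtain ⟨⟨h12, h13, h14⟩, ⟨h23, h24⟩, h34, -⟩ := hnd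
    rcases u with x0 | y0 <;> rcases w1 with x1 | y1 <;> rcases w2 with x2 | y2 <;>
      rcases w3 with x3 | y3 <;> rcases v with x4 | y4 <;>
      simp at h1 h2 h3 h4
    · exact caseL d hd x0 x2 x4 y1 y3 (ne_of_edge_ne_lr h12)
        (ne_of_edge_ne_rl h23) (ne_of_edge_ne_lr h34)
    · exact caseR d hd x1 x3 y0 y2 y4 (ne_of_edge_ne_rl h12)
        (ne_of_edge_ne_lr h23) (ne_of_edge_ne_rl h34)
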